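/- arXiv:1003.1999 — 4 statements merged into one kernel-verified Lean document; each statement's English description precedes it below -/
import Mathlib

section
/- For all non-negative integers n and m, the q-super Catalan number A_{n,m}(q) = [2n]!_q [2m]!_q / ([n]!_q [n+m]!_q [m]!_q) is a polynomial in q with integer coefficients. -/
/-!
Since `1 + q + ⋯ + q^{k-1} = ∏_{d ∣ k, d > 1} Φ_d(q)`, the `q`-factorial factors as
`[n]!_q = ∏_{d ≥ 2} Φ_d(q)^⌊n/d⌋`, so a quotient of `q`-factorials is a polynomial as soon as
the corresponding inequality of floors holds for every `d`.
For the super Catalan numbers this is `⌊x⌋ + ⌊x + y⌋ + ⌊y⌋ ≤ ⌊2x⌋ + ⌊2y⌋` at `x = n/d`, `y = m/d`: writing `r, s` for the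
remainders of `n, m` mod `d`, a carry in `r + s` forces `2r ≥ d` or `2s ≥ d`.
-/

open Polynomial

/-- The `q`-factorial `[n]! = ∏_{i=1}^n (1 + q + ⋯ + q^{i-1})` as a polynomial over `ℤ`. -/
noncomputable def qFactorial (n : ℕ) : Polynomial ℤ :=
  ∏ i ∈ Finset.range n, ∑ j ∈ Finset.range (i + 1), X ^ j

theorem Nat.divisors_erase_one_eq_filter_Icc {n N : ℕ} (hn : n ≠ 0) (h : n ≤ N) :
    n.divisors.erase 1 = (Finset.Icc 2 N).filter (· ∣ n) := by
  ext d
  simp only [Finset.mem_erase, Nat.mem_divisors, Finset.mem_filter, Finset.mem_Icc]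
  constructor
  · rintro ⟨hne, hd, -⟩
    have := Nat.pos_of_dvd_of_pos hd (Nat.pos_of_ne_zero hn)
    exact ⟨⟨by omega, (Nat.le_of_dvd (Nat.pos_of_ne_zero hn) hd).trans h⟩, hd⟩
  · rintro ⟨⟨h2, -⟩, hd⟩
    exact ⟨by omega, hd, hn⟩

theorem qFactorial_succ (n : ℕ) :
    qFactorial (n + 1) = qFactorial n * ∑ j ∈ Finset.range (n + 1), X ^ j :=
  Finset.prod_range_succ _ n

theorem qFactorial_eq_prod_cyclotomic {n N : ℕ} (h : n ≤ N) :
    qFactorial n = ∏ d ∈ Finset.Icc 2 N, cyclotomic d ℤ ^ (n / d) := by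
  induction n with
  | zero => simp [qFactorial]
  | succ n ih =>
    rw [qFactorial_succ, ih (by omega), ← prod_cyclotomic_eq_geom_sum n.succ_pos,
      Nat.divisors_erase_one_eq_filter_Icc n.succ_ne_zero h, Finset.prod_filter,
      ← Finset.prod_mul_distrib]
    refine Finset.prod_congr rfl fun d _ => ?_
    by_cases hd : d ∣ n + 1 <;> simp [Nat.succ_div, hd, pow_succ]

theorem prod_qFactorial_dvd_prod_qFactorial {ι κ : Type*} [Fintype ι] [Fintype κ]
    (a : ι → ℕ) (b : κ → ℕ) (h : ∀ d, ∑ i, a i / d ≤ ∑ j, b j / d) :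
    ∏ i, qFactorial (a i) ∣ ∏ j, qFactorial (b j) := by
  set N := ∑ i, a i + ∑ j, b j
  have ha (i : ι) : a i ≤ N :=
    (Finset.single_le_sum (fun _ _ => Nat.zero_le _) (Finset.mem_univ i)).trans
      (Nat.le_add_right _ _)
  have hb (j : κ) : b j ≤ N :=
    (Finset.single_le_sum (fun _ _ => Nat.zero_le _) (Finset.mem_univ j)).trans
      (Nat.le_add_left _ _)
  simp only [qFactorial_eq_prod_cyclotomic (ha _), qFactorial_eq_prod_cyclotomic (hb _)]
  rw [Finset.prod_comm, Finset.prod_comm (s := Finset.univ)]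
  refine Finset.prod_dvd_prod_of_dvd _ _ fun d _ => ?_
  rw [Finset.prod_pow_eq_pow_sum, Finset.prod_pow_eq_pow_sum]
  exact pow_dvd_pow _ (h d)

theorem Nat.div_add_add_div_add_div_le (d n m : ℕ) :
    n / d + (n + m) / d + m / d ≤ 2 * n / d + 2 * m / d := by
  rcases Nat.eq_zero_or_pos d with rfl | hd
  · simp
  have hr := Nat.mod_lt n hd
  have hs := Nat.mod_lt m hd
  rw [two_mul, two_mul, Nat.add_div hd, Nat.add_div hd, Nat.add_div hd]
  split_ifs <;> omega

theorem q_super_catalan_integral (n m : ℕ) :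
    qFactorial n * qFactorial (n + m) * qFactorial m ∣
      qFactorial (2 * n) * qFactorial (2 * m) := by
  have := prod_qFactorial_dvd_prod_qFactorial ![n, n + m, m] ![2 * n, 2 * m] fun d => by
    simpa [Fin.sum_univ_three, Fin.sum_univ_two] using Nat.div_add_add_div_add_div_le d n m
  simpa [Fin.prod_univ_three, Fin.prod_univ_two] using this
end

section
/- For all integers n ≥ m ≥ 0, the polynomial B_{n,m}(q) = [2n]!_q [m]!_q / ([n]!_q [2m]!_q [n-m]!_q) has non-negative integer coefficients. -/
/-!
`B_{n,0}` is the central Gaussian binomial `[2n choose n]`, nonnegative by the `q`-Pascal rule,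
and `B_{n,n} = 1`. For `n = m + k + 1` the polynomials satisfy
`B_{n+1,m+1} = (1 + q^{n+m+1} + q^{n+2m+2} + q^{2n+m+2}) B_{n,m+1} + q^{k+1} B_{n,m}`,
so nonnegativity follows by induction on `n`. Divided by `B_{n,m+1}`, this recurrence is an
identity between `q`-integers, which becomes a polynomial identity in `q, q^m, q^k` once
multiplied by `(q - 1)^3`.
-/

open Polynomial

def nonnegCoeffs : Subsemiring ℤ[X] where
  carrier := {p | ∀ i, 0 ≤ p.coeff i}
  mul_mem' hp hq i := by
    rw [coeff_mul]
    exact Finset.sum_nonneg fun x _ => mul_nonneg (hp x.1) (hq x.2)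
  one_mem' i := by
    rw [coeff_one]
    positivity
  add_mem' hp hq i := by
    rw [coeff_add]
    exact add_nonneg (hp i) (hq i)
  zero_mem' i := le_of_eq (coeff_zero i).symm

theorem X_mem_nonnegCoeffs : (X : ℤ[X]) ∈ nonnegCoeffs := fun i => by
  rw [coeff_X]
  positivity

noncomputable def qInt (n : ℕ) : ℤ[X] := ∑ j ∈ Finset.range n, X ^ j

theorem qFactorial_zero : qFactorial 0 = 1 := by simp [qFactorial]

theorem qFactorial_succ_s12 (n : ℕ) : qFactorial (n + 1) = qFactorial n * qInt (n + 1) := by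
  simp [qFactorial, qInt, Finset.prod_range_succ]

theorem X_sub_one_mul_qInt (n : ℕ) : (X - 1) * qInt n = X ^ n - 1 := by
  rw [qInt, mul_comm, geom_sum_mul]

theorem qInt_add (a b : ℕ) : qInt (a + b) = qInt a + X ^ a * qInt b := by
  simp [qInt, Finset.sum_range_add, Finset.mul_sum, pow_add]

theorem X_sub_one_pow_three_mul_qInt (a b c : ℕ) :
    (X - 1) ^ 3 * (qInt a * qInt b * qInt c) = (X ^ a - 1) * (X ^ b - 1) * (X ^ c - 1) := by
  simp only [← X_sub_one_mul_qInt]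
  ring

theorem exists_nonnegCoeffs_qFactorial_add (k l : ℕ) :
    ∃ P ∈ nonnegCoeffs, qFactorial (k + l) = P * (qFactorial k * qFactorial l) := by
  induction k generalizing l with
  | zero => exact ⟨1, one_mem _, by simp [qFactorial_zero]⟩
  | succ k ihk =>
    induction l with
    | zero => exact ⟨1, one_mem _, by simp [qFactorial_zero]⟩
    | succ l ihl =>
      obtain ⟨P₁, hP₁, e₁⟩ := ihk (l + 1)
      obtain ⟨P₂, hP₂, e₂⟩ := ihl
      refine ⟨P₁ + X ^ (k + 1) * P₂,
        add_mem hP₁ (mul_mem (pow_mem X_mem_nonnegCoeffs _) hP₂), ?_⟩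
      rw [show k + (l + 1) = k + l + 1 by ring] at e₁
      rw [show k + 1 + l = k + l + 1 by ring] at e₂
      rw [show k + 1 + (l + 1) = k + l + 1 + 1 by ring, qFactorial_succ_s12 (k + l + 1),
        show k + l + 1 + 1 = (k + 1) + (l + 1) by ring, qInt_add]
      rw [qFactorial_succ_s12 k, qFactorial_succ_s12 l] at *
      linear_combination qInt (k + 1) * e₁ + X ^ (k + 1) * qInt (l + 1) * e₂

theorem qInt_recurrence {n m k : ℕ} (hn : n = m + k + 1) :
    qInt (2 * n + 1) * qInt (2 * n + 2) * qInt (m + 1) =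
      (1 + X ^ (n + m + 1) + X ^ (n + 2 * m + 2) + X ^ (2 * n + m + 2)) *
          (qInt (n + 1) * qInt (k + 1) * qInt (m + 1)) +
        X ^ (k + 1) * (qInt (n + 1) * qInt (2 * m + 1) * qInt (2 * m + 2)) := by
  have hX : (X - 1 : ℤ[X]) ≠ 0 := X_sub_C_ne_zero 1
  apply mul_left_cancel₀ (pow_ne_zero 3 hX)
  rw [mul_add, mul_left_comm _ (_ + X ^ (2 * n + m + 2)), mul_left_comm _ (X ^ (k + 1))]
  simp only [X_sub_one_pow_three_mul_qInt]
  subst hn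
  ring

def BNonneg (n m : ℕ) : Prop :=
  ∃ P ∈ nonnegCoeffs, qFactorial (2 * n) * qFactorial m =
    P * (qFactorial n * qFactorial (2 * m) * qFactorial (n - m))

theorem bNonneg_self (n : ℕ) : BNonneg n n :=
  ⟨1, one_mem _, by rw [Nat.sub_self, qFactorial_zero]; ring⟩

theorem bNonneg_zero (n : ℕ) : BNonneg n 0 := by
  obtain ⟨P, hP, e⟩ := exists_nonnegCoeffs_qFactorial_add n n
  exact ⟨P, hP, by rw [two_mul, e, Nat.sub_zero, mul_zero, qFactorial_zero]; ring⟩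

theorem BNonneg.succ {n m : ℕ} (hmn : m < n) (h₁ : BNonneg n (m + 1)) (h₂ : BNonneg n m) :
    BNonneg (n + 1) (m + 1) := by
  obtain ⟨k, hn⟩ := Nat.exists_eq_add_of_lt hmn
  obtain ⟨P₁, hP₁, e₁⟩ := h₁
  obtain ⟨P₂, hP₂, e₂⟩ := h₂
  set c : ℤ[X] := 1 + X ^ (n + m + 1) + X ^ (n + 2 * m + 2) + X ^ (2 * n + m + 2)
  have hc : c ∈ nonnegCoeffs := by
    have hX := X_mem_nonnegCoeffs
    exact add_mem (add_mem (add_mem (one_mem _) (pow_mem hX _)) (pow_mem hX _)) (pow_mem hX _)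
  refine ⟨c * P₁ + X ^ (k + 1) * P₂,
    add_mem (mul_mem hc hP₁) (mul_mem (pow_mem X_mem_nonnegCoeffs _) hP₂), ?_⟩
  rw [show n - (m + 1) = k by omega] at e₁
  rw [show n - m = k + 1 by omega, qFactorial_succ_s12 k] at e₂
  rw [show 2 * (m + 1) = 2 * m + 1 + 1 by ring] at e₁ ⊢
  rw [show n + 1 - (m + 1) = k + 1 by omega, show 2 * (n + 1) = 2 * n + 1 + 1 by ring]
  simp only [qFactorial_succ_s12] at e₁ e₂ ⊢
  linear_combination qFactorial (2 * n) * qFactorial m * qInt_recurrence hn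
    + c * qInt (n + 1) * qInt (k + 1) * e₁
    + X ^ (k + 1) * qInt (n + 1) * qInt (2 * m + 1) * qInt (2 * m + 1 + 1) * e₂

theorem bNonneg_of_le {n m : ℕ} (h : m ≤ n) : BNonneg n m := by
  induction n generalizing m with
  | zero => exact Nat.le_zero.mp h ▸ bNonneg_zero 0
  | succ n ih =>
    rcases m with _ | m
    · exact bNonneg_zero _
    rcases (Nat.le_of_succ_le_succ h).eq_or_lt with rfl | hmn
    · exact bNonneg_self _
    exact (ih hmn).succ hmn (ih hmn.le)

theorem q_B_positive (n m : ℕ) (h : m ≤ n) :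
    ∃ P : Polynomial ℤ, (∀ i, 0 ≤ P.coeff i) ∧
      qFactorial (2 * n) * qFactorial m =
        P * (qFactorial n * qFactorial (2 * m) * qFactorial (n - m)) :=
  bNonneg_of_le h
end

section
/- For non-negative integers n and p, the polynomials B satisfy B_{n+p,n}(q) = Σ_{k=0}^{⌊p/2⌋} B_{n+k,n}(q) Σ_{j=k}^{p-k} q^{k(n+k)+j(n+j)} [2n+p choose 2n+2k]_q [p-2k choose j-k]_q. -/
/-!
Since `[2n+2p]! / ([2n+p]! [p]!) = [2n+2p choose p]`, `B_{n+p,n}` is a fixed factor times this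
coefficient. Two applications of the `q`-Vandermonde identity, splitting `2n+2p = (n+p) + (n+p)` and
then `n+p = j + (n+p-j)`, expand it as a double sum over `j ≤ p` and `k ≤ p - j`. The terms with
`k > j` vanish, so the sum re-indexes as `k ≤ p/2`, `k ≤ j ≤ p - k`, and each term regroups,
factorial by factorial, into `B_{n+k,n} [2n+p choose 2n+2k] [p-2k choose j-k]`.
-/

open Polynomial

/-- The `q`-factorial `[n]! = ∏_{i=1}^n (1 + q + ⋯ + q^{i-1})` in `ℚ(q)`. -/
noncomputable def qFac (n : ℕ) : RatFunc ℚ :=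
  ∏ i ∈ Finset.range n, ∑ j ∈ Finset.range (i + 1), RatFunc.X ^ j

/-- The Gaussian binomial coefficient `[n choose m]_q`, zero when out of range. -/
noncomputable def qBinom (n m : ℕ) : RatFunc ℚ :=
  if m ≤ n then qFac n / (qFac (n - m) * qFac m) else 0

/-- The polynomial `B_{n,m}(q) = [2n]![m]!/([n]![2m]![n-m]!)`. -/
noncomputable def qB (n m : ℕ) : RatFunc ℚ :=
  qFac (2 * n) * qFac m / (qFac n * qFac (2 * m) * qFac (n - m))

open Finset

noncomputable def qNat (m : ℕ) : RatFunc ℚ := ∑ j ∈ range m, RatFunc.X ^ j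

lemma qNat_ne_zero {m : ℕ} (hm : 0 < m) : qNat m ≠ 0 := by
  have hpoly : qNat m = algebraMap ℚ[X] (RatFunc ℚ) (∑ j ∈ range m, X ^ j) := by
    simp [qNat, RatFunc.algebraMap_X]
  rw [hpoly]
  refine RatFunc.algebraMap_ne_zero fun h => ?_
  simpa [coeff_X_pow, hm] using congrArg (coeff · 0) h

lemma qNat_add (a b : ℕ) : qNat (a + b) = qNat a + RatFunc.X ^ a * qNat b := by
  simp only [qNat, sum_range_add, mul_sum, pow_add]

lemma qFac_zero : qFac 0 = 1 := prod_range_zero _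

lemma qFac_succ (n : ℕ) : qFac (n + 1) = qFac n * qNat (n + 1) := prod_range_succ _ n

lemma qFac_ne_zero (n : ℕ) : qFac n ≠ 0 := by
  induction n with
  | zero => simp [qFac_zero]
  | succ n ih => rw [qFac_succ]; exact mul_ne_zero ih (qNat_ne_zero n.succ_pos)

lemma qBinom_of_le {n m : ℕ} (h : m ≤ n) : qBinom n m = qFac n / (qFac (n - m) * qFac m) :=
  if_pos h

lemma qBinom_of_lt {n m : ℕ} (h : n < m) : qBinom n m = 0 := if_neg h.not_ge

lemma qBinom_zero_right (n : ℕ) : qBinom n 0 = 1 := by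
  rw [qBinom_of_le n.zero_le, Nat.sub_zero, qFac_zero, mul_one, div_self (qFac_ne_zero n)]

lemma qBinom_self (n : ℕ) : qBinom n n = 1 := by
  rw [qBinom_of_le le_rfl, Nat.sub_self, qFac_zero, one_mul, div_self (qFac_ne_zero n)]

lemma qBinom_add_succ_succ (n j : ℕ) :
    qBinom (n + j + 1) (j + 1) = qBinom (n + j) (j + 1) + RatFunc.X ^ n * qBinom (n + j) j := by
  cases n with
  | zero => simp [qBinom_self, qBinom_of_lt j.lt_succ_self]
  | succ d =>
    simp (disch := omega) only [qBinom_of_le]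
    rw [show d + 1 + j + 1 - (j + 1) = d + 1 by omega, show d + 1 + j - (j + 1) = d by omega,
      show d + 1 + j - j = d + 1 by omega, qFac_succ (d + 1 + j), qFac_succ d, qFac_succ j,
      show d + 1 + j + 1 = d + 1 + (j + 1) by omega, qNat_add]
    field_simp [qFac_ne_zero, qNat_ne_zero d.succ_pos, qNat_ne_zero j.succ_pos]

-- The `q`-Pascal rule multiplied by `q ^ j`, so that it needs no hypothesis `j ≤ n`.
lemma pow_mul_qBinom_succ_succ (n j : ℕ) :
    RatFunc.X ^ j * qBinom (n + 1) (j + 1) =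
      RatFunc.X ^ j * qBinom n (j + 1) + RatFunc.X ^ n * qBinom n j := by
  rcases lt_or_ge n j with h | h
  · simp [qBinom_of_lt h, qBinom_of_lt (Nat.succ_lt_succ h),
      qBinom_of_lt (h.trans j.lt_succ_self)]
  obtain ⟨d, rfl⟩ := Nat.exists_eq_add_of_le' h
  rw [qBinom_add_succ_succ, mul_add, ← mul_assoc, ← pow_add, add_comm j d]

theorem qBinom_vandermonde (a c r : ℕ) :
    qBinom (a + (c + r)) r =
      ∑ j ∈ range (r + 1),
        RatFunc.X ^ (j * (c + j)) * (qBinom a j * qBinom (c + r) (r - j)) := by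
  induction a generalizing c r with
  | zero =>
    rw [sum_range_succ', sum_eq_zero fun j _ => by rw [qBinom_of_lt j.succ_pos]; ring]
    simp [qBinom_zero_right]
  | succ a ih =>
    cases r with
    | zero => simp [qBinom_zero_right]
    | succ r =>
      have ih' := ih (c + 1) r
      rw [show a + (c + 1 + r) = a + (c + (r + 1)) by omega,
        show c + 1 + r = c + (r + 1) by omega] at ih'
      rw [show a + 1 + (c + (r + 1)) = a + c + 1 + r + 1 by omega, qBinom_add_succ_succ,
        show a + c + 1 + r = a + (c + (r + 1)) by omega, ih c (r + 1), ih',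
        sum_range_succ' _ (r + 1), sum_range_succ' _ (r + 1), mul_sum, add_right_comm,
        ← sum_add_distrib, qBinom_zero_right, qBinom_zero_right]
      refine congrArg (· + _) (sum_congr rfl fun i _ => ?_)
      rw [Nat.add_sub_add_right]
      linear_combination (-RatFunc.X ^ (c + 1 + i * (c + 1 + i)) * qBinom (c + (r + 1)) (r - i)) *
        pow_mul_qBinom_succ_succ a i

theorem qBinom_two_mul_add_eq_sum_sum (n p : ℕ) :
    qBinom (2 * (n + p)) p =
      ∑ j ∈ range (p + 1), ∑ k ∈ range (p - j + 1),
        RatFunc.X ^ (j * (n + j) + k * (n + k)) *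
          (qBinom (n + p) j * (qBinom j k * qBinom (n + p - j) (p - j - k))) := by
  rw [two_mul, qBinom_vandermonde (n + p) n p]
  refine sum_congr rfl fun j hj => ?_
  have hjp : j ≤ p := Nat.lt_succ_iff.mp (mem_range.mp hj)
  have hsplit := qBinom_vandermonde j n (p - j)
  rw [show j + (n + (p - j)) = n + p by omega, show n + (p - j) = n + p - j by omega] at hsplit
  rw [hsplit, mul_sum, mul_sum]
  exact sum_congr rfl fun k _ => by ring

theorem sum_range_sum_range_sub_eq_sum_range_sum_Icc {M : Type*} [AddCommMonoid M] (p : ℕ)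
    (f : ℕ → ℕ → M) (hf : ∀ ⦃j k⦄, j < k → f j k = 0) :
    ∑ j ∈ range (p + 1), ∑ k ∈ range (p - j + 1), f j k =
      ∑ k ∈ range (p / 2 + 1), ∑ j ∈ Icc k (p - k), f j k := by
  have hdrop (j : ℕ) :
      ∑ k ∈ range (p - j + 1), f j k = ∑ k ∈ range (p - j + 1) with k ≤ j, f j k :=
    (sum_filter_of_ne fun k _ hk => not_lt.mp (mt (hf ·) hk)).symm
  simp only [hdrop]
  refine sum_comm' fun j k => ?_
  simp only [mem_range, mem_filter, mem_Icc]
  omega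

lemma qB_add_eq_mul_qBinom (n p : ℕ) :
    qB (n + p) n =
      qFac n * qFac (2 * n + p) / (qFac (2 * n) * qFac (n + p)) * qBinom (2 * (n + p)) p := by
  rw [qB, qBinom_of_le (by omega), show n + p - n = p by omega,
    show 2 * (n + p) - p = 2 * n + p by omega]
  field_simp [qFac_ne_zero]

lemma qB_mul_qBinom_mul_qBinom (n p : ℕ) {k j : ℕ} (hkj : k ≤ j) (hjp : j + k ≤ p) :
    qB (n + k) n * (qBinom (2 * n + p) (2 * n + 2 * k) * qBinom (p - 2 * k) (j - k)) =
      qFac n * qFac (2 * n + p) / (qFac (2 * n) * qFac (n + p)) *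
        (qBinom (n + p) j * (qBinom j k * qBinom (n + p - j) (p - j - k))) := by
  obtain ⟨i, rfl⟩ := Nat.exists_eq_add_of_le hkj
  obtain ⟨l, rfl⟩ := Nat.exists_eq_add_of_le hjp
  simp (disch := omega) only [qB, qBinom_of_le]
  rw [show n + (k + i + k + l) - (k + i) = n + k + l by omega,
    show k + i + k + l - (k + i) - k = l by omega, show k + i - k = i by omega,
    show n + k + l - l = n + k by omega, show n + k - n = k by omega,
    show 2 * n + (k + i + k + l) - (2 * n + 2 * k) = i + l by omega,
    show k + i + k + l - 2 * k = i + l by omega, show i + l - i = l by omega,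
    show 2 * (n + k) = 2 * n + 2 * k by ring]
  field_simp [qFac_ne_zero]

theorem qB_recurrence (n p : ℕ) :
    qB (n + p) n =
      ∑ k ∈ Finset.range (p / 2 + 1), qB (n + k) n *
        ∑ j ∈ Finset.Icc k (p - k),
          RatFunc.X ^ (k * (n + k) + j * (n + j)) *
            qBinom (2 * n + p) (2 * n + 2 * k) * qBinom (p - 2 * k) (j - k) := by
  rw [qB_add_eq_mul_qBinom, qBinom_two_mul_add_eq_sum_sum]
  simp only [mul_sum]
  rw [sum_range_sum_range_sub_eq_sum_range_sum_Icc p _ fun j k hjk => by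
    rw [qBinom_of_lt hjk]; ring]
  refine sum_congr rfl fun k _ => sum_congr rfl fun j hj => ?_
  obtain ⟨hkj, hjp⟩ := mem_Icc.mp hj
  linear_combination
    -RatFunc.X ^ (j * (n + j) + k * (n + k)) * qB_mul_qBinom_mul_qBinom n p hkj (by omega)
end

section
/- For non-negative integers n and p, Gessel's identity holds: A_{n,n+p} = Σ_{k=0}^{⌊p/2⌋} 2^{p-2k} C(p, 2k) A_{n,k}, where A_{n,m} is the super Catalan number. -/
/-!
Both sides satisfy the first-order recurrence `(2n+p+1) S(p+1) = 2(2n+2p+1) S(p)` in `p`, with the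
same value at `p = 0`. For the left side this is the ratio of consecutive super Catalan numbers. For
the sum it is the Wilf–Zeilberger method: after multiplying by `p+1`, the recurrence holds termwise
up to the difference `G(k+1) - G(k)` of an explicit certificate `G`, which vanishes at both ends of
the summation range, so the sum telescopes.
-/

/-- The super Catalan number `A_{n,m} = (2n)!(2m)!/(n!(n+m)!m!)` as a rational number. -/
noncomputable def superCatalan (n m : ℕ) : ℚ :=
  (Nat.factorial (2 * n) * Nat.factorial (2 * m) : ℚ) /
    (Nat.factorial n * Nat.factorial (n + m) * Nat.factorial m)

open Finset

theorem Nat.cast_choose_succ_mul {R : Type*} [CommRing R] (n k : ℕ) :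
    (n.choose (k + 1) : R) * (k + 1) = n.choose k * (n - k) := by
  rcases le_or_gt k n with hk | hk
  · simpa [Nat.cast_sub hk] using congrArg (Nat.cast : ℕ → R) (n.choose_succ_right_eq k)
  · simp [Nat.choose_eq_zero_of_lt hk, Nat.choose_eq_zero_of_lt (hk.trans (Nat.lt_succ_self k))]

theorem Nat.cast_sub_mul_choose_add_one {R : Type*} [CommRing R] (n k : ℕ) :
    ((n + 1 - k : R)) * (n + 1).choose k = (n + 1) * n.choose k := by
  have h := Nat.cast_choose_succ_mul (R := R) (n + 1) k
  have h' := congrArg (Nat.cast : ℕ → R) (n.add_one_mul_choose_eq k)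
  push_cast at h h'
  linear_combination -h - h'

theorem Nat.cast_mul_choose_add_two {R : Type*} [CommRing R] (n k : ℕ) :
    ((k + 1) * (k + 2) : R) * (n + 1).choose (k + 2) = (n + 1) * (n - k) * n.choose k := by
  have h := Nat.cast_choose_succ_mul (R := R) n k
  have h' := congrArg (Nat.cast : ℕ → R) (n.add_one_mul_choose_eq (k + 1))
  push_cast at h'
  linear_combination (n + 1 : R) * h - (k + 1 : R) * h'

theorem superCatalan_succ_right (n m : ℕ) :
    ((n + m + 1) * (m + 1) : ℚ) * superCatalan n (m + 1)
      = (2 * m + 1) * (2 * m + 2) * superCatalan n m := by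
  rw [superCatalan, superCatalan, show 2 * (m + 1) = 2 * m + 1 + 1 by ring, ← add_assoc,
    Nat.factorial_succ (2 * m + 1), Nat.factorial_succ (2 * m), Nat.factorial_succ (n + m),
    Nat.factorial_succ m]
  push_cast
  field_simp
  ring

theorem superCatalan_self_add_succ (n p : ℕ) :
    (2 * n + p + 1 : ℚ) * superCatalan n (n + p + 1)
      = 2 * (2 * n + 2 * p + 1) * superCatalan n (n + p) := by
  have h := superCatalan_succ_right n (n + p)
  push_cast at h
  apply mul_left_cancel₀ (show (n + p + 1 : ℚ) ≠ 0 by positivity)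
  linear_combination h

theorem superCatalan_self (n : ℕ) : superCatalan n n = superCatalan n 0 := by
  simp only [superCatalan, ← two_mul, Nat.mul_zero, Nat.add_zero, Nat.factorial_zero,
    Nat.cast_one, mul_one]
  field_simp

/-- The `k`-th term of Gessel's sum, with `2 ^ (p - 2k)` written as `2 ^ p / 4 ^ k` to keep
truncated subtraction out of the exponent. -/
noncomputable def gesselSummand (n p k : ℕ) : ℚ :=
  2 ^ p * 4⁻¹ ^ k * (p.choose (2 * k) : ℚ) * superCatalan n k

noncomputable def gesselCertificate (n p k : ℕ) : ℚ :=
  -(8 * k * (n + k) * 2 ^ p * 4⁻¹ ^ k * ((p + 1).choose (2 * k) : ℚ) * superCatalan n k)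

theorem gesselSummand_of_lt {n p k : ℕ} (h : p < 2 * k) : gesselSummand n p k = 0 := by
  simp [gesselSummand, Nat.choose_eq_zero_of_lt h]

theorem two_pow_sub_mul_choose (p k : ℕ) :
    (2 : ℚ) ^ (p - 2 * k) * p.choose (2 * k) = 2 ^ p * 4⁻¹ ^ k * p.choose (2 * k) := by
  rcases le_or_gt (2 * k) p with hk | hk
  · rw [show (4 : ℚ)⁻¹ ^ k = (2 ^ (2 * k))⁻¹ by rw [pow_mul, inv_pow]; norm_num,
      pow_sub₀ (2 : ℚ) two_ne_zero hk]
  · simp [Nat.choose_eq_zero_of_lt hk]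

theorem gesselSummand_wz (n p k : ℕ) :
    (p + 1 : ℚ) * ((2 * n + p + 1) * gesselSummand n (p + 1) k
        - 2 * (2 * n + 2 * p + 1) * gesselSummand n p k)
      = gesselCertificate n p (k + 1) - gesselCertificate n p k := by
  have h1 := Nat.cast_sub_mul_choose_add_one (R := ℚ) p (2 * k)
  have h2 := Nat.cast_mul_choose_add_two (R := ℚ) p (2 * k)
  have h3 := superCatalan_succ_right n k
  rw [gesselSummand, gesselSummand, gesselCertificate, gesselCertificate,
    show 2 * (k + 1) = 2 * k + 2 by ring]
  push_cast at h1 h2 ⊢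
  linear_combination (8 * (2 : ℚ) ^ p * 4⁻¹ ^ (k + 1)) *
    ((p + 1).choose (2 * k + 2) * h3 + superCatalan n k * h2
      + (2 * n + p + 2 * k + 1) * superCatalan n k * h1)

theorem sum_gesselSummand_succ (n p : ℕ) :
    (2 * n + p + 1 : ℚ) * ∑ k ∈ range (p + 2), gesselSummand n (p + 1) k
      = 2 * (2 * n + 2 * p + 1) * ∑ k ∈ range (p + 1), gesselSummand n p k := by
  have telescope := Finset.sum_range_sub (gesselCertificate n p) (p + 2)
  simp only [← gesselSummand_wz, ← mul_sum, sum_sub_distrib] at telescope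
  rw [sum_range_succ (gesselSummand n p), gesselSummand_of_lt (by omega), add_zero] at telescope
  have hG₀ : gesselCertificate n p 0 = 0 := by simp [gesselCertificate]
  have hG : gesselCertificate n p (p + 2) = 0 := by
    simp [gesselCertificate, Nat.choose_eq_zero_of_lt (show p + 1 < 2 * (p + 2) by omega)]
  rw [hG₀, hG, sub_zero, mul_eq_zero, sub_eq_zero] at telescope
  exact telescope.resolve_left (by positivity)

theorem superCatalan_self_add_eq_sum (n p : ℕ) :
    superCatalan n (n + p) = ∑ k ∈ range (p + 1), gesselSummand n p k := by
  induction p with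
  | zero => simp [gesselSummand, superCatalan_self]
  | succ p ih =>
    apply mul_left_cancel₀ (show (2 * n + p + 1 : ℚ) ≠ 0 by positivity)
    rw [← add_assoc, superCatalan_self_add_succ, sum_gesselSummand_succ, ih]

theorem gessel_identity (n p : ℕ) :
    superCatalan n (n + p) =
      ∑ k ∈ Finset.range (p / 2 + 1),
        (2 : ℚ) ^ (p - 2 * k) * (Nat.choose p (2 * k) : ℚ) * superCatalan n k := by
  rw [superCatalan_self_add_eq_sum]
  symm
  apply sum_subset_zero_on_sdiff (range_subset_range.mpr (by omega))
  · intro k hk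
    simp only [mem_sdiff, mem_range] at hk
    exact gesselSummand_of_lt (by omega)
  · intro k _
    rw [gesselSummand, two_pow_sub_mul_choose]
end
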